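/- Let A be a commutative K-ring, P and Q A-modules. For each s there is an A-module isomorphism Dif_s(P,Q) ≅ Hom_{A−A•}(P, Dif_s(A,Q)): any s-order Q-valued differential operator Δ on P factorizes uniquely as Δ = h_s ∘ 𝔣_Δ where h_s: Dif_s(A,Q) → Q is evaluation at 1 and 𝔣_Δ: P → Dif_s(A,Q) is given by (𝔣_Δ p)(a) = Δ(a·p). -/
import Mathlib


section

variable (K A : Type*) [CommRing K] [CommRing A] [Algebra K A]
variable {P Q : Type*}
  [AddCommGroup P] [Module K P] [Module A P] [IsScalarTower K A P]
  [AddCommGroup Q] [Module K Q] [Module A Q] [IsScalarTower K A Q]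

/-- `(δ_a Φ)(p) = a • Φ p − Φ (a • p)`. -/
def deltaOp (a : A) (Φ : P →ₗ[K] Q) : P →ₗ[K] Q where
  toFun p := a • Φ p - Φ (a • p)
  map_add' p q := by simp [smul_add]; abel
  map_smul' k p := by
    simp only [RingHom.id_apply, smul_sub]
    rw [smul_comm a k p, Φ.map_smul k (a • p), Φ.map_smul k p, smul_comm a k (Φ p)]

/-- `Δ` is a differential operator of order `s`:
`δ_{a_0} ∘ ⋯ ∘ δ_{a_s} Δ = 0` for all `a_0, …, a_s ∈ A` (so `IsDiffOp 0` means
`δ_a Δ = 0` for every `a`). -/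
def IsDiffOp : ℕ → (P →ₗ[K] Q) → Prop
  | 0, Δ => ∀ a : A, deltaOp K A a Δ = 0
  | s + 1, Δ => ∀ a : A, IsDiffOp s (deltaOp K A a Δ)

end

section Aux

variable (K A : Type*) {P Q : Type*} [CommRing K] [CommRing A] [Algebra K A]
  [AddCommGroup P] [Module K P] [Module A P] [IsScalarTower K A P]
  [AddCommGroup Q] [Module K Q] [Module A Q] [IsScalarTower K A Q]

set_option linter.unusedSectionVars false

/-- `𝔣_Δ : P → Dif(A,Q)`, `(𝔣_Δ p)(a) = Δ (a • p)`. -/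
def fmap (Δ : P →ₗ[K] Q) : P →ₗ[K] (A →ₗ[K] Q) where
  toFun p :=
    { toFun := fun a => Δ (a • p)
      map_add' := fun a b => by simp [add_smul]
      map_smul' := fun k a => by simp [smul_assoc] }
  map_add' p q := by ext a; simp [smul_add]
  map_smul' k p := by ext a; simp [smul_comm a k p]

@[simp] lemma fmap_apply (Δ : P →ₗ[K] Q) (p : P) (a : A) : fmap K A Δ p a = Δ (a • p) := rfl

/-- evaluation at `1`. -/
def gmap (f : P →ₗ[K] (A →ₗ[K] Q)) : P →ₗ[K] Q where
  toFun p := f p 1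
  map_add' p q := by simp
  map_smul' k p := by simp

@[simp] lemma gmap_apply (f : P →ₗ[K] (A →ₗ[K] Q)) (p : P) : gmap K A f p = f p 1 := rfl

lemma deltaOp_fmap (b : A) (Δ : P →ₗ[K] Q) (p : P) :
    deltaOp K A b ((fmap K A Δ) p) = (fmap K A (deltaOp K A b Δ)) p := by
  ext a
  simp [deltaOp, mul_smul]

lemma fmap_isDiffOp (s : ℕ) (Δ : P →ₗ[K] Q) (h : IsDiffOp K A s Δ) (p : P) :
    IsDiffOp K A s ((fmap K A Δ) p) := by
  induction s generalizing Δ with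
  | zero =>
    intro b
    rw [deltaOp_fmap, h b]
    ext a; simp [deltaOp]
  | succ s ih =>
    intro b
    rw [deltaOp_fmap]
    exact ih _ (h b)

lemma gmap_isDiffOp (s : ℕ) (f : P →ₗ[K] (A →ₗ[K] Q))
    (h : ∀ p : P, IsDiffOp K A s (f p))
    (hf : ∀ (a : A) (p : P) (b : A), f (a • p) b = f p (a * b)) :
    IsDiffOp K A s (gmap K A f) := by
  induction s generalizing f with
  | zero =>
    intro a
    ext p
    have := congrFun (congrArg DFunLike.coe (h p a)) (1 : A)
    simpa [deltaOp, hf] using this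
  | succ s ih =>
    intro a
    let g : P →ₗ[K] (A →ₗ[K] Q) :=
      { toFun := fun p => deltaOp K A a (f p)
        map_add' := fun p q => by ext c; simp [deltaOp]; abel
        map_smul' := fun k p => by
          ext c
          simp [deltaOp, smul_sub, smul_comm a k] }
    have hg : deltaOp K A a (gmap K A f) = gmap K A g := by
      ext p
      simp [deltaOp, g, hf]
    rw [hg]
    refine ih g (fun p => h p a) ?_
    intro b p c
    show deltaOp K A a (f (b • p)) c = deltaOp K A a (f p) (b * c)
    simp [deltaOp, hf, mul_left_comm, mul_assoc]

end Aux

/-- For each `s` there is an isomorphism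
`Dif_s(P,Q) ≅ Hom_{A−A•}(P, Dif_s(A,Q))`: any `s`-order `Q`-valued differential operator
`Δ` on `P` factorizes uniquely as `Δ = h_s ∘ 𝔣_Δ`, where `h_s` is evaluation at `1` and
`(𝔣_Δ p)(a) = Δ (a • p)`; `𝔣_Δ` is a morphism from the `A`-module `P` to the
`A•`-module `Dif_s(A,Q)` (i.e. `𝔣_Δ (a • p) (b) = 𝔣_Δ p (a * b)`), and
`Δ ↦ 𝔣_Δ` is a bijection onto the set of such morphisms. -/
theorem diffOp_equiv_hom_into_diffOp_of_ring
    (K A P Q : Type*) [CommRing K] [CommRing A] [Algebra K A]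
    [AddCommGroup P] [Module K P] [Module A P] [IsScalarTower K A P]
    [AddCommGroup Q] [Module K Q] [Module A Q] [IsScalarTower K A Q]
    (s : ℕ) :
    ∃ e : {Δ : P →ₗ[K] Q // IsDiffOp K A s Δ} ≃
        {f : P →ₗ[K] (A →ₗ[K] Q) //
          (∀ p : P, IsDiffOp K A s (f p)) ∧
          (∀ (a : A) (p : P) (b : A), f (a • p) b = f p (a * b))},
      ∀ (Δ : {Δ : P →ₗ[K] Q // IsDiffOp K A s Δ}) (p : P) (a : A),
        ((e Δ : P →ₗ[K] (A →ₗ[K] Q)) p) a = Δ.1 (a • p) := by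
  refine ⟨{
    toFun := fun Δ => ⟨fmap K A Δ.1, fmap_isDiffOp K A s Δ.1 Δ.2, fun a p b => by
      simp [smul_smul, mul_comm]⟩
    invFun := fun f => ⟨gmap K A f.1, gmap_isDiffOp K A s f.1 f.2.1 f.2.2⟩
    left_inv := fun Δ => by
      ext p
      simp
    right_inv := fun f => by
      ext p a
      simp [f.2.2] }, fun Δ p a => rfl⟩
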